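/- Uniqueness of principle dilations: any two principle homomorphism dilation systems (π₁, S₁, T₁, W₁) and (π₂, S₂, T₂, W₂) of a linear system (φ, A, V) are equivalent, i.e., there is a bijective linear R : W₁ → W₂ with R T₁ = T₂, S₂ R = S₁, and R π₁(a) = π₂(a) R for all a ∈ A. -/

import Mathlib

variable (k : Type*) [Field k] (A : Type*) [Ring A] [Algebra k A]
  (V : Type*) [AddCommGroup V] [Module k V]

/-!
The span `K` of the pairs `(π₁ a (T₁ x), π₂ a (T₂ x))` in `W₁ × W₂` is invariant under
`π₁ × π₂`, and `S₁ ∘ fst = S₂ ∘ snd` on it because both dilate the same `φ`. Minimality makes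
both projections of `K` onto `W₁` and `W₂` surjective. By irreducibility they are also injective:
`{w | (0, w) ∈ K}` is a `π₂`-invariant subspace of `ker S₂`, hence zero, and symmetrically.
So `K` is the graph of a linear bijection `R : W₁ → W₂`, which intertwines everything because
`K` contains `(T₁ x, T₂ x)` and is invariant.
-/

section Graph

variable {R M N : Type*} [Ring R] [AddCommGroup M] [Module R M] [AddCommGroup N] [Module R N]

theorem Submodule.exists_linearEquiv_graph_eq (K : Submodule R (M × N))
    (h_inl : K.comap (LinearMap.inl R M N) = ⊥) (h_inr : K.comap (LinearMap.inr R M N) = ⊥)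
    (h_fst : K.map (LinearMap.fst R M N) = ⊤) (h_snd : K.map (LinearMap.snd R M N) = ⊤) :
    ∃ e : M ≃ₗ[R] N, (e : M →ₗ[R] N).graph = K := by
  have bijective_fst : Function.Bijective ((LinearMap.fst R M N).comp K.subtype) := by
    refine ⟨(injective_iff_map_eq_zero _).2 fun p hp => Subtype.ext (Prod.ext hp ?_), ?_⟩
    · have : p.1.2 ∈ K.comap (LinearMap.inr R M N) := by simp [← hp]
      rwa [h_inr, Submodule.mem_bot] at this
    · rw [← LinearMap.range_eq_top, LinearMap.range_comp, Submodule.range_subtype, h_fst]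
  have bijective_snd : Function.Bijective ((LinearMap.snd R M N).comp K.subtype) := by
    refine ⟨(injective_iff_map_eq_zero _).2 fun p hp => Subtype.ext (Prod.ext ?_ hp), ?_⟩
    · have : p.1.1 ∈ K.comap (LinearMap.inl R M N) := by simp [← hp]
      rwa [h_inl, Submodule.mem_bot] at this
    · rw [← LinearMap.range_eq_top, LinearMap.range_comp, Submodule.range_subtype, h_snd]
  set e₁ := LinearEquiv.ofBijective _ bijective_fst
  set e₂ := LinearEquiv.ofBijective _ bijective_snd
  refine ⟨e₁.symm.trans e₂, le_antisymm (fun p hp => ?_) fun p hp => ?_⟩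
  · rw [LinearMap.mem_graph_iff] at hp
    have hq : ((e₁.symm p.1 : K) : M × N) = p :=
      Prod.ext (e₁.apply_symm_apply p.1) hp.symm
    exact hq ▸ (e₁.symm p.1).2
  · rw [LinearMap.mem_graph_iff]
    have hq : e₁.symm p.1 = ⟨p, hp⟩ := e₁.symm_apply_eq.2 rfl
    rw [LinearEquiv.coe_coe, LinearEquiv.trans_apply, hq]
    rfl

end Graph

section Dilation

variable {k A V} {W₁ W₂ : Type*} [AddCommGroup W₁] [Module k W₁] [AddCommGroup W₂] [Module k W₂]
  (π₁ : A →ₐ[k] Module.End k W₁) (π₂ : A →ₐ[k] Module.End k W₂)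
  (T₁ : V →ₗ[k] W₁) (T₂ : V →ₗ[k] W₂) (S₁ : W₁ →ₗ[k] V) (S₂ : W₂ →ₗ[k] V)

def dilationGraph : Submodule k (W₁ × W₂) :=
  Submodule.span k {p | ∃ (a : A) (x : V), p = (π₁ a (T₁ x), π₂ a (T₂ x))}

theorem mk_mem_dilationGraph (a : A) (x : V) :
    (π₁ a (T₁ x), π₂ a (T₂ x)) ∈ dilationGraph π₁ π₂ T₁ T₂ :=
  Submodule.subset_span ⟨a, x, rfl⟩

theorem prodMap_mem_dilationGraph (a : A) {p : W₁ × W₂} (hp : p ∈ dilationGraph π₁ π₂ T₁ T₂) :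
    (π₁ a p.1, π₂ a p.2) ∈ dilationGraph π₁ π₂ T₁ T₂ := by
  suffices dilationGraph π₁ π₂ T₁ T₂ ≤
      (dilationGraph π₁ π₂ T₁ T₂).comap ((π₁ a).prodMap (π₂ a)) from this hp
  refine Submodule.span_le.2 ?_
  rintro _ ⟨b, x, rfl⟩
  simpa [Module.End.mul_apply] using mk_mem_dilationGraph π₁ π₂ T₁ T₂ (a * b) x

theorem apply_fst_eq_apply_snd_of_mem_dilationGraph
    (hS : ∀ a : A, S₁ ∘ₗ (π₁ a : W₁ →ₗ[k] W₁) ∘ₗ T₁ = S₂ ∘ₗ (π₂ a : W₂ →ₗ[k] W₂) ∘ₗ T₂)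
    {p : W₁ × W₂} (hp : p ∈ dilationGraph π₁ π₂ T₁ T₂) : S₁ p.1 = S₂ p.2 := by
  refine LinearMap.eqOn_span (f := S₁ ∘ₗ LinearMap.fst k W₁ W₂)
    (g := S₂ ∘ₗ LinearMap.snd k W₁ W₂) ?_ hp
  rintro _ ⟨a, x, rfl⟩
  exact LinearMap.congr_fun (hS a) x

theorem map_fst_dilationGraph :
    (dilationGraph π₁ π₂ T₁ T₂).map (LinearMap.fst k W₁ W₂) =
      Submodule.span k {w | ∃ (a : A) (x : V), w = π₁ a (T₁ x)} := by
  rw [dilationGraph, Submodule.map_span]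
  congr 1
  ext w
  simp [eq_comm]

theorem map_snd_dilationGraph :
    (dilationGraph π₁ π₂ T₁ T₂).map (LinearMap.snd k W₁ W₂) =
      Submodule.span k {w | ∃ (a : A) (x : V), w = π₂ a (T₂ x)} := by
  rw [dilationGraph, Submodule.map_span]
  congr 1
  ext w
  simp [eq_comm]

theorem comap_inl_eq_bot_of_irreducible (K : Submodule k (W₁ × W₂))
    (hK : ∀ a : A, ∀ p ∈ K, (π₁ a p.1, π₂ a p.2) ∈ K) (hS : ∀ p ∈ K, S₁ p.1 = S₂ p.2)
    (hirr₁ : ∀ K : Submodule k W₁, (∀ a : A, K.map (π₁ a : W₁ →ₗ[k] W₁) ≤ K) →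
      K ≤ LinearMap.ker S₁ → K = ⊥) :
    K.comap (LinearMap.inl k W₁ W₂) = ⊥ := by
  refine hirr₁ _ (fun a => ?_) fun w hw => ?_
  · rintro _ ⟨w, hw, rfl⟩
    simpa using hK a _ hw
  · simpa using hS _ hw

theorem comap_inr_eq_bot_of_irreducible (K : Submodule k (W₁ × W₂))
    (hK : ∀ a : A, ∀ p ∈ K, (π₁ a p.1, π₂ a p.2) ∈ K) (hS : ∀ p ∈ K, S₁ p.1 = S₂ p.2)
    (hirr₂ : ∀ K : Submodule k W₂, (∀ a : A, K.map (π₂ a : W₂ →ₗ[k] W₂) ≤ K) →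
      K ≤ LinearMap.ker S₂ → K = ⊥) :
    K.comap (LinearMap.inr k W₁ W₂) = ⊥ := by
  refine hirr₂ _ (fun a => ?_) fun w hw => ?_
  · rintro _ ⟨w, hw, rfl⟩
    simpa using hK a _ hw
  · simpa using (hS _ hw).symm

end Dilation

theorem principle_dilations_equivalent (φ : A →ₗ[k] Module.End k V)
    (W₁ : Type*) [AddCommGroup W₁] [Module k W₁]
    (W₂ : Type*) [AddCommGroup W₂] [Module k W₂]
    (π₁ : A →ₐ[k] Module.End k W₁) (T₁ : V →ₗ[k] W₁) (S₁ : W₁ →ₗ[k] V)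
    (hdil₁ : ∀ a : A, (φ a : V →ₗ[k] V) = S₁ ∘ₗ (π₁ a : W₁ →ₗ[k] W₁) ∘ₗ T₁)
    (hmin₁ : Submodule.span k {w : W₁ | ∃ (a : A) (x : V), w = π₁ a (T₁ x)} = ⊤)
    (hirr₁ : ∀ K : Submodule k W₁, (∀ a : A, K.map (π₁ a : W₁ →ₗ[k] W₁) ≤ K) →
      K ≤ LinearMap.ker S₁ → K = ⊥)
    (π₂ : A →ₐ[k] Module.End k W₂) (T₂ : V →ₗ[k] W₂) (S₂ : W₂ →ₗ[k] V)
    (hdil₂ : ∀ a : A, (φ a : V →ₗ[k] V) = S₂ ∘ₗ (π₂ a : W₂ →ₗ[k] W₂) ∘ₗ T₂)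
    (hmin₂ : Submodule.span k {w : W₂ | ∃ (a : A) (x : V), w = π₂ a (T₂ x)} = ⊤)
    (hirr₂ : ∀ K : Submodule k W₂, (∀ a : A, K.map (π₂ a : W₂ →ₗ[k] W₂) ≤ K) →
      K ≤ LinearMap.ker S₂ → K = ⊥) :
    ∃ R : W₁ ≃ₗ[k] W₂, (∀ x : V, R (T₁ x) = T₂ x) ∧ (∀ w : W₁, S₂ (R w) = S₁ w) ∧
      ∀ (a : A) (w : W₁), R (π₁ a w) = π₂ a (R w) := by
  set K := dilationGraph π₁ π₂ T₁ T₂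
  have hK : ∀ a : A, ∀ p ∈ K, (π₁ a p.1, π₂ a p.2) ∈ K := fun a _ =>
    prodMap_mem_dilationGraph π₁ π₂ T₁ T₂ a
  have hS : ∀ p ∈ K, S₁ p.1 = S₂ p.2 := fun _ =>
    apply_fst_eq_apply_snd_of_mem_dilationGraph π₁ π₂ T₁ T₂ S₁ S₂
      fun a => (hdil₁ a).symm.trans (hdil₂ a)
  obtain ⟨R, hR⟩ := K.exists_linearEquiv_graph_eq
    (comap_inl_eq_bot_of_irreducible π₁ π₂ S₁ S₂ K hK hS hirr₁)
    (comap_inr_eq_bot_of_irreducible π₁ π₂ S₁ S₂ K hK hS hirr₂)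
    (by rw [map_fst_dilationGraph, hmin₁]) (by rw [map_snd_dilationGraph, hmin₂])
  have mem_K_iff : ∀ p : W₁ × W₂, p ∈ K ↔ p.2 = R p.1 := fun p => by
    rw [← hR, LinearMap.mem_graph_iff, LinearEquiv.coe_coe]
  have graph_mem_K : ∀ w : W₁, (w, R w) ∈ K := fun w => (mem_K_iff _).2 rfl
  refine ⟨R, fun x => ?_, fun w => (hS _ (graph_mem_K w)).symm, fun a w => ?_⟩
  · simpa using ((mem_K_iff _).1 (mk_mem_dilationGraph π₁ π₂ T₁ T₂ 1 x)).symm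
  · exact ((mem_K_iff _).1 (hK a _ (graph_mem_K w))).symm
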